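/- The seed mutation μ_k preserves the skew-symmetric bilinear form: for all i, j ∈ I, (e'_i, e'_j) equals the mutated matrix entry μ_k(ε)_{ij} where ε_{ij} = (e_i, e_j). In particular, the linear map sending e_i to e'_i (when {e'_i} is a basis) intertwines ε with μ_k(ε). -/
import Mathlib


/-- Fomin–Zelevinsky matrix mutation in direction `k`. -/
def fzMut {I : Type*} [DecidableEq I] (ε : I → I → ℤ) (k : I) : I → I → ℤ :=
  fun i j =>
    if i = k ∨ j = k then - ε i j
    else if 0 < ε i k * ε k j then ε i j + |ε i k| * ε k j
    else ε i j

lemma mut_int (a b : ℤ) :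
    b * max a 0 + a * max (-b) 0 = if 0 < b * a then b * |a| else 0 := by
  rcases le_or_gt a 0 with ha | ha <;> rcases le_or_gt b 0 with hb | hb
  · rw [max_eq_right ha, max_eq_left (by omega : (0:ℤ) ≤ -b), abs_of_nonpos ha]
    split <;> nlinarith
  · rw [max_eq_right ha, max_eq_right (by omega : -b ≤ (0:ℤ))]
    split <;> nlinarith
  · rw [max_eq_left ha.le, max_eq_left (by omega : (0:ℤ) ≤ -b), abs_of_pos ha]
    split <;> nlinarith
  · rw [max_eq_left ha.le, max_eq_right (by omega : -b ≤ (0:ℤ)), abs_of_pos ha]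
    split <;> nlinarith

/-- The seed mutation preserves the skew-symmetric bilinear form:
`(e'_i, e'_j)` equals the Fomin–Zelevinsky mutation of the matrix
`ε i j = (e i, e j)`. -/
theorem seed_mutation_form {I : Type*} [DecidableEq I]
    (Λ : Type*) [AddCommGroup Λ] [Module ℤ Λ]
    (B : Λ →ₗ[ℤ] Λ →ₗ[ℤ] ℤ) (hskew : ∀ x y, B x y = - B y x)
    (e : I → Λ) (k : I)
    (e' : I → Λ)
    (he' : ∀ i, e' i = if i = k then - e k
      else e i + (max (B (e i) (e k)) 0) • e k) :
    ∀ i j, B (e' i) (e' j) = fzMut (fun a b => B (e a) (e b)) k i j := by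
  have hkk : B (e k) (e k) = 0 := by
    have := hskew (e k) (e k); omega
  intro i j
  rw [he' i, he' j]
  by_cases hi : i = k <;> by_cases hj : j = k <;>
    simp [fzMut, hi, hj, hkk, map_add, map_neg, map_smul, smul_eq_mul, mul_comm]
  have hk : B (e j) (e k) = - B (e k) (e j) := hskew _ _
  rw [hk]
  set a := B (e i) (e k); set b := B (e k) (e j); set c := B (e i) (e j)
  rw [show c + b * (a ⊔ 0) + a * (-b ⊔ 0) = c + (b * max a 0 + a * max (-b) 0) by ring,
    mut_int]
  split <;> ring
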